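/- arXiv:1010.4020 — 2 statements merged into one kernel-verified Lean document; each statement's English description precedes it below -/
import Mathlib

section
/- Abstract propositional version of Theorem 2: Let Prov : Prop-formulas → Prop be a provability predicate on a Boolean algebra (or on Prop via a monotone, modus-ponens-closed operator). Suppose: (i) Prov is closed under modus ponens and contains all classical tautologies; (ii) Prov((c → a i) → p i) for all i in a finite nonempty type I (axiom COb with consistency proposition c); (iii) ¬ Prov(⋀_{i∈I} p i) follows from consistency via Im; (iv) ¬ Prov c (Gödel hypothesis); (v) Prov is consistent (¬ Prov ⊥). Then there exists i ∈ I with ¬ Prov (p i) and ¬ Prov (¬ p i). -/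
/-- Propositional formulas over atoms `c`, `a i`, `p i` (i in an index type). -/
inductive Fml (I : Type) : Type
  | c : Fml I
  | a : I → Fml I
  | p : I → Fml I
  | bot : Fml I
  | imp : Fml I → Fml I → Fml I
  | and : Fml I → Fml I → Fml I

namespace Fml

/-- Negation. -/
def neg {I : Type} (f : Fml I) : Fml I := Fml.imp f Fml.bot

/-- Evaluation of a formula under a valuation of the atoms. -/
def eval {I : Type} (vc : Prop) (va vp : I → Prop) : Fml I → Prop
  | Fml.c => vc
  | Fml.a i => va i
  | Fml.p i => vp i
  | Fml.bot => False
  | Fml.imp f g => eval vc va vp f → eval vc va vp g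
  | Fml.and f g => eval vc va vp f ∧ eval vc va vp g

/-- Classical tautology: true under every valuation. -/
def Taut {I : Type} (f : Fml I) : Prop :=
  ∀ (vc : Prop) (va vp : I → Prop), eval vc va vp f

/-- Conjunction ⋀_{i ∈ I} p i over the finite index type I. -/
noncomputable def conjP (I : Type) [Fintype I] : Fml I :=
  (Finset.univ : Finset I).toList.foldr (fun i acc => Fml.and (Fml.p i) acc)
    (Fml.imp Fml.bot Fml.bot)

end Fml

/-!
Suppose every `p i` were decided. By Im some `p i` is unprovable, so `¬ p i` is provable.
Since `¬ (c → a i)` classically entails `c`, the COb axiom `(c → a i) → p i` tautologically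
yields `¬ p i → c`, so `c` would be provable, contradicting the Gödel hypothesis.
-/

namespace Fml

variable {I : Type} {Prov : Set (Fml I)}

theorem mem_of_taut_imp (htaut : ∀ f : Fml I, Taut f → f ∈ Prov)
    (hmp : ∀ f g : Fml I, imp f g ∈ Prov → f ∈ Prov → g ∈ Prov)
    {f g : Fml I} (hfg : Taut (imp f g)) (hf : f ∈ Prov) : g ∈ Prov :=
  hmp f g (htaut _ hfg) hf

theorem mem_of_taut_imp₂ (htaut : ∀ f : Fml I, Taut f → f ∈ Prov)
    (hmp : ∀ f g : Fml I, imp f g ∈ Prov → f ∈ Prov → g ∈ Prov)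
    {f g h : Fml I} (hfgh : Taut (imp f (imp g h)))
    (hf : f ∈ Prov) (hg : g ∈ Prov) : h ∈ Prov :=
  hmp g h (mem_of_taut_imp htaut hmp hfgh hf) hg

theorem foldr_and_p_mem (htaut : ∀ f : Fml I, Taut f → f ∈ Prov)
    (hmp : ∀ f g : Fml I, imp f g ∈ Prov → f ∈ Prov → g ∈ Prov)
    (l : List I) (hl : ∀ i ∈ l, p i ∈ Prov) :
    l.foldr (fun i acc => and (p i) acc) (imp bot bot) ∈ Prov := by
  induction l with
  | nil => exact htaut _ fun _ _ _ => id
  | cons i t ih =>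
    exact mem_of_taut_imp₂ htaut hmp (fun _ _ _ hp hq => ⟨hp, hq⟩)
      (hl i List.mem_cons_self) (ih fun j hj => hl j (List.mem_cons_of_mem i hj))

theorem conjP_mem [Fintype I] (htaut : ∀ f : Fml I, Taut f → f ∈ Prov)
    (hmp : ∀ f g : Fml I, imp f g ∈ Prov → f ∈ Prov → g ∈ Prov)
    (hp : ∀ i, p i ∈ Prov) : conjP I ∈ Prov :=
  foldr_and_p_mem htaut hmp _ fun i _ => hp i

theorem c_mem_of_neg_p_mem (htaut : ∀ f : Fml I, Taut f → f ∈ Prov)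
    (hmp : ∀ f g : Fml I, imp f g ∈ Prov → f ∈ Prov → g ∈ Prov)
    {i : I} (hCOb : imp (imp c (a i)) (p i) ∈ Prov)
    (hneg : neg (p i) ∈ Prov) : c ∈ Prov := by
  refine mem_of_taut_imp₂ htaut hmp ?_ hCOb hneg
  exact fun _ _ _ h₁ h₂ => Classical.byContradiction fun hc => h₂ (h₁ fun hc' => (hc hc').elim)

end Fml

theorem abstract_theorem_two_general (I : Type) [Fintype I]
    (Prov : Set (Fml I))
    (htaut : ∀ f : Fml I, Fml.Taut f → f ∈ Prov)
    (hmp : ∀ f g : Fml I, Fml.imp f g ∈ Prov → f ∈ Prov → g ∈ Prov)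
    (hCOb : ∀ i : I, Fml.imp (Fml.imp Fml.c (Fml.a i)) (Fml.p i) ∈ Prov)
    (hIm : Fml.conjP I ∉ Prov)
    (hGodel : Fml.c ∉ Prov) :
    ∃ i : I, Fml.p i ∉ Prov ∧ Fml.neg (Fml.p i) ∉ Prov := by
  obtain ⟨i, hi⟩ : ∃ i, Fml.p i ∉ Prov := by
    by_contra! hall
    exact hIm (Fml.conjP_mem htaut hmp hall)
  refine ⟨i, hi, fun hneg => hGodel ?_⟩
  exact Fml.c_mem_of_neg_p_mem htaut hmp (hCOb i) hneg

/-- Abstract propositional version of Theorem 2: if `Prov` contains all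
classical tautologies and is closed under modus ponens, contains all the COb
axioms `(c → a i) → p i`, does not prove ⋀_i p i (Im), does not prove `c`
(Gödel), and is consistent, then some `p i` is undetermined. -/
theorem abstract_theorem_two (I : Type) [Fintype I] [Nonempty I]
    (Prov : Set (Fml I))
    (htaut : ∀ f : Fml I, Fml.Taut f → f ∈ Prov)
    (hmp : ∀ f g : Fml I, Fml.imp f g ∈ Prov → f ∈ Prov → g ∈ Prov)
    (hCOb : ∀ i : I, Fml.imp (Fml.imp Fml.c (Fml.a i)) (Fml.p i) ∈ Prov)
    (hIm : Fml.conjP I ∉ Prov)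
    (hGodel : Fml.c ∉ Prov)
    (hcons : Fml.bot ∉ Prov) :
    ∃ i : I, Fml.p i ∉ Prov ∧ Fml.neg (Fml.p i) ∉ Prov :=
  abstract_theorem_two_general I Prov htaut hmp hCOb hIm hGodel
end

section
/- If a theory F' proves COb := ∀t ∀i ((Cons → A(t,i)) → P(t,i)) and also proves ¬P(t,i) for some fixed t, i, then F' ⊢ Cons; hence, if additionally F' satisfies Gödel's second incompleteness theorem with respect to the sentence Cons (consistent F' implies F' ⊬ Cons) and F' is consistent, then F' ⊬ ¬P(t,i) for every t, i. -/
/-!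
If `Cons` fails, each premise `Cons → A t i` of `COb` holds vacuously, so `COb` yields `P t i`.
Thus `COb ∧ ¬P t i → Cons` is a tautology, and a theory closed under modus ponens and proving all
tautologies proves `Cons` as soon as it proves `COb` and `¬P t i`; the second incompleteness
theorem then forbids this for a consistent theory.
-/

theorem cons_of_forall_imp_of_not {T I : Type} {A P : T → I → Prop} {Cons : Prop} (t : T) (i : I)
    (hCOb : ∀ t i, (Cons → A t i) → P t i) (hnP : ¬ P t i) : Cons :=
  by_contra fun hCons => hnP (hCOb t i fun h => absurd h hCons)

theorem provable_of_imp₂ {Pr : Prop → Prop} (hmp : ∀ p q : Prop, Pr (p → q) → Pr p → Pr q)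
    (htaut : ∀ p : Prop, p → Pr p) {p q r : Prop} (h : p → q → r) (hp : Pr p) (hq : Pr q) :
    Pr r :=
  hmp _ _ (hmp _ _ (htaut _ h) hp) hq

/-- If F' proves COb then provability of ¬P(t,i) yields F' ⊢ Cons; hence under
Gödel's second incompleteness property for Cons, a consistent F' proves no
¬P(t,i). -/
theorem no_provably_false_observations (T I : Type)
    (A P : T → I → Prop) (Cons : Prop)
    (Pr : Prop → Prop)
    (hmp : ∀ p q : Prop, Pr (p → q) → Pr p → Pr q)
    (htaut : ∀ p : Prop, p → Pr p)
    (hCOb : Pr (∀ t i, (Cons → A t i) → P t i)) :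
    (∀ t i, Pr (¬ P t i) → Pr Cons) ∧
      ((¬ Pr False → ¬ Pr Cons) → ¬ Pr False → ∀ t i, ¬ Pr (¬ P t i)) := by
  have provable_cons : ∀ t i, Pr (¬ P t i) → Pr Cons := fun t i hnP =>
    provable_of_imp₂ hmp htaut (cons_of_forall_imp_of_not t i) hCOb hnP
  exact ⟨provable_cons, fun hGodel hconsistent t i hnP => hGodel hconsistent (provable_cons t i hnP)⟩
end
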